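/- (Input-to-state stability of the constant-metric closed loop.) Let f : ℝⁿ → ℝⁿ be continuously differentiable with Jacobian A(x), B an n×m real matrix, W symmetric positive definite, λ > 0, ρ ≥ 0, with W·A(x)ᵀ + A(x)·W - ρ·B·Bᵀ ⪯ -2λW for all x, and K = -(ρ/2)·Bᵀ·W⁻¹; set M = W⁻¹. Let u⋆ : [0,∞) → ℝᵐ be continuous, x⋆ a solution of ẋ⋆ = f(x⋆) + B·u⋆(t), w : [0,∞) → ℝⁿ a continuous disturbance, and x a solution of ẋ = f(x) + B·(u⋆(t) + K·(x - x⋆(t))) + w(t). Then V(t) := √((x(t)-x⋆(t))ᵀ·M·(x(t)-x⋆(t))) satisfies V(t) ≤ e^{-λt}·V(0) + ∫₀ᵗ e^{-λ(t-s)}·√(w(s)ᵀ·M·w(s)) ds for all t ≥ 0. -/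

import Mathlib

/-!
Let `e = x - x⋆` and `M = W⁻¹`. The feedback `K` turns the LMI into the closed-loop
contraction estimate `v ⬝ (A + BK) W v ≤ -λ v ⬝ W v`; integrating it along the segment from
`x⋆` to `x` (with `v = M e`) gives `e ⬝ M (F x - F x⋆) ≤ -λ e ⬝ M e` for the closed-loop
vector field `F x = f x + B K x`. With Cauchy–Schwarz for `M` on the disturbance term,
`q = e ⬝ M e` satisfies `q' ≤ -2λ q + 2 √q √(w ⬝ M w)`, i.e. formally
`(√q)' ≤ -λ √q + √(w ⬝ M w)`, and a comparison argument for `√(q + ε²)` followed by `ε → 0`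
yields the bound.
-/

open Matrix Set Real

namespace Matrix

variable {ι κ : Type*} [Fintype ι] [Fintype κ]

lemma IsHermitian.dotProduct_mulVec_comm {M : Matrix ι ι ℝ} (hM : M.IsHermitian)
    (u v : ι → ℝ) : u ⬝ᵥ M *ᵥ v = v ⬝ᵥ M *ᵥ u := by
  rw [dotProduct_mulVec, ← mulVec_transpose, dotProduct_comm,
    ← conjTranspose_eq_transpose_of_trivial, hM.eq]

lemma PosSemidef.dotProduct_mulVec_le_sqrt_mul_sqrt {M : Matrix ι ι ℝ} (hM : M.PosSemidef)
    (u v : ι → ℝ) : u ⬝ᵥ M *ᵥ v ≤ √(u ⬝ᵥ M *ᵥ u) * √(v ⬝ᵥ M *ᵥ v) := by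
  classical
  have hcs := LinearMap.BilinForm.apply_mul_apply_le_of_forall_zero_le (toLinearMap₂' ℝ M)
    (fun x => by simpa [toLinearMap₂'_apply'] using hM.dotProduct_mulVec_nonneg x) u v
  simp only [toLinearMap₂'_apply'] at hcs
  rw [hM.isHermitian.dotProduct_mulVec_comm v u, ← sq] at hcs
  rw [← Real.sqrt_mul (by simpa using hM.dotProduct_mulVec_nonneg u)]
  exact (le_abs_self _).trans (Real.abs_le_sqrt hcs)

theorem PosDef.dotProduct_closedLoop_mulVec_le [DecidableEq ι] {W A : Matrix ι ι ℝ}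
    {B : Matrix ι κ ℝ} {lam ρ : ℝ} (hW : W.PosDef)
    (hLMI : ((-(2 * lam)) • W - (W * Aᵀ + A * W - ρ • (B * Bᵀ))).PosSemidef) (v : ι → ℝ) :
    v ⬝ᵥ (A + B * ((-(ρ / 2)) • (Bᵀ * W⁻¹))) *ᵥ (W *ᵥ v) ≤ -lam * (v ⬝ᵥ W *ᵥ v) := by
  have hWAt : v ⬝ᵥ (W * Aᵀ) *ᵥ v = v ⬝ᵥ A *ᵥ (W *ᵥ v) := by
    rw [← mulVec_mulVec, hW.isHermitian.dotProduct_mulVec_comm, mulVec_transpose,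
      ← dotProduct_mulVec]
  have hfeedback :
      (B * ((-(ρ / 2)) • (Bᵀ * W⁻¹))) *ᵥ (W *ᵥ v) = (-(ρ / 2)) • (B * Bᵀ) *ᵥ v := by
    rw [Matrix.mul_smul, smul_mulVec, mulVec_mulVec, Matrix.mul_assoc, Matrix.mul_assoc,
      nonsing_inv_mul _ hW.det_pos.ne'.isUnit, Matrix.mul_one]
  have h0 := hLMI.dotProduct_mulVec_nonneg v
  simp only [star_trivial, sub_mulVec, add_mulVec, smul_mulVec, dotProduct_sub, dotProduct_add,
    dotProduct_smul, smul_eq_mul, hWAt, ← mulVec_mulVec (M := A)] at h0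
  rw [add_mulVec, dotProduct_add, hfeedback, dotProduct_smul, smul_eq_mul]
  linarith

end Matrix

section Calculus

variable {ι : Type*} [Fintype ι]

theorem HasDerivAt.dotProduct {u v : ℝ → ι → ℝ} {u' v' : ι → ℝ} {t : ℝ}
    (hu : HasDerivAt u u' t) (hv : HasDerivAt v v' t) :
    HasDerivAt (fun t => u t ⬝ᵥ v t) (u' ⬝ᵥ v t + u t ⬝ᵥ v') t := by
  have := HasDerivAt.fun_sum (u := Finset.univ)
    fun i _ => (hasDerivAt_pi.1 hu i).fun_mul (hasDerivAt_pi.1 hv i)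
  rwa [Finset.sum_add_distrib] at this

theorem HasDerivAt.matrix_mulVec {κ : Type*} [Fintype κ] {u : ℝ → ι → ℝ} {u' : ι → ℝ} {t : ℝ}
    (M : Matrix κ ι ℝ) (hu : HasDerivAt u u' t) :
    HasDerivAt (fun t => M *ᵥ u t) (M *ᵥ u') t :=
  M.mulVecLin.toContinuousLinearMap.hasFDerivAt.comp_hasDerivAt t hu

theorem HasDerivAt.dotProduct_mulVec_self {M : Matrix ι ι ℝ} (hM : M.IsHermitian)
    {u : ℝ → ι → ℝ} {u' : ι → ℝ} {t : ℝ} (hu : HasDerivAt u u' t) :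
    HasDerivAt (fun t => u t ⬝ᵥ M *ᵥ u t) (2 * (u t ⬝ᵥ M *ᵥ u')) t := by
  convert hu.dotProduct (hu.matrix_mulVec M) using 1
  rw [hM.dotProduct_mulVec_comm u']
  ring

variable [DecidableEq ι]

theorem hasFDerivAt_add_mulVec {f : (ι → ℝ) → ι → ℝ} {A : Matrix ι ι ℝ} {x : ι → ℝ}
    (hf : HasFDerivAt f (toLin' A).toContinuousLinearMap x) (C : Matrix ι ι ℝ) :
    HasFDerivAt (fun x => f x + C *ᵥ x) (toLin' (A + C)).toContinuousLinearMap x := by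
  simpa using hf.add (toLin' C).toContinuousLinearMap.hasFDerivAt

theorem dotProduct_sub_le_of_hasFDerivAt {F : (ι → ℝ) → ι → ℝ} {J : (ι → ℝ) → Matrix ι ι ℝ}
    (hF : ∀ x, HasFDerivAt F (toLin' (J x)).toContinuousLinearMap x) {v e : ι → ℝ} {C : ℝ}
    (hC : ∀ x, v ⬝ᵥ J x *ᵥ e ≤ C) (b : ι → ℝ) : v ⬝ᵥ (F (b + e) - F b) ≤ C := by
  have hline : ∀ s : ℝ, HasDerivAt (fun s : ℝ => b + s • e) e s := fun s => by
    simpa using ((hasDerivAt_id s).smul_const e).const_add b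
  have hψ : ∀ s : ℝ,
      HasDerivAt (fun s : ℝ => v ⬝ᵥ F (b + s • e)) (v ⬝ᵥ J (b + s • e) *ᵥ e) s := fun s => by
    simpa using (hasDerivAt_const s v).dotProduct ((hF _).comp_hasDerivAt s (hline s))
  have := image_sub_le_mul_sub_of_deriv_le (fun s => (hψ s).differentiableAt)
    (fun s => (hψ s).deriv ▸ hC _) zero_le_one
  simpa [dotProduct_sub] using this

theorem Matrix.PosDef.dotProduct_inv_mulVec_closedLoop_sub_le {κ : Type*} [Fintype κ]
    {f : (ι → ℝ) → ι → ℝ} {A : (ι → ℝ) → Matrix ι ι ℝ} {W : Matrix ι ι ℝ} {B : Matrix ι κ ℝ}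
    {lam ρ : ℝ} (hW : W.PosDef) (hf : ∀ x, HasFDerivAt f (toLin' (A x)).toContinuousLinearMap x)
    (hLMI : ∀ x, ((-(2 * lam)) • W - (W * (A x)ᵀ + A x * W - ρ • (B * Bᵀ))).PosSemidef)
    (a b : ι → ℝ) :
    (a - b) ⬝ᵥ W⁻¹ *ᵥ (f a - f b + (B * ((-(ρ / 2)) • (Bᵀ * W⁻¹))) *ᵥ (a - b)) ≤
      -lam * ((a - b) ⬝ᵥ W⁻¹ *ᵥ (a - b)) := by
  set K := B * ((-(ρ / 2)) • (Bᵀ * W⁻¹))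
  set e := a - b
  set v := W⁻¹ *ᵥ e
  have hWv : W *ᵥ v = e := by
    rw [mulVec_mulVec, mul_nonsing_inv _ hW.det_pos.ne'.isUnit, one_mulVec]
  have hsegment := dotProduct_sub_le_of_hasFDerivAt (fun x => hasFDerivAt_add_mulVec (hf x) K)
    (fun x => hWv ▸ hW.dotProduct_closedLoop_mulVec_le (hLMI x) v) b
  have hdiff : f (b + e) + K *ᵥ (b + e) - (f b + K *ᵥ b) = f a - f b + K *ᵥ e := by
    rw [show b + e = a by simp [e], mulVec_sub]
    abel
  rw [hdiff] at hsegment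
  rwa [hW.inv.isHermitian.dotProduct_mulVec_comm e, dotProduct_comm, dotProduct_comm e]

end Calculus

theorem le_exp_mul_add_integral_of_hasDerivAt_le {V V' h : ℝ → ℝ} {lam T : ℝ} (hT : 0 ≤ T)
    (hh : Continuous h) (hV : ∀ t ∈ Icc 0 T, HasDerivAt V (V' t) t)
    (hV' : ∀ t ∈ Icc 0 T, V' t ≤ -lam * V t + h t) :
    V T ≤ exp (-lam * T) * V 0 + ∫ s in (0:ℝ)..T, exp (-lam * (T - s)) * h s := by
  have hweight : Continuous fun s => exp (lam * s) * h s := by fun_prop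
  set φ : ℝ → ℝ := fun t => exp (lam * t) * V t - ∫ s in (0:ℝ)..t, exp (lam * s) * h s
  have hφ : ∀ t ∈ Icc 0 T, HasDerivAt φ
      (lam * exp (lam * t) * V t + exp (lam * t) * V' t - exp (lam * t) * h t) t := fun t ht => by
    have hexp : HasDerivAt (fun t => exp (lam * t)) (lam * exp (lam * t)) t := by
      simpa [mul_comm] using ((hasDerivAt_id t).const_mul lam).exp
    exact (hexp.mul (hV t ht)).sub (hweight.integral_hasStrictDerivAt 0 t).hasDerivAt
  have hanti : AntitoneOn φ (Icc 0 T) := by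
    refine antitoneOn_of_deriv_nonpos (convex_Icc 0 T)
      (fun t ht => (hφ t ht).continuousAt.continuousWithinAt)
      (fun t ht => (hφ t (interior_subset ht)).differentiableAt.differentiableWithinAt)
      (fun t ht => ?_)
    have ht' := interior_subset ht
    rw [(hφ t ht').deriv]
    nlinarith [hV' t ht', exp_pos (lam * t)]
  have hφT : φ T ≤ V 0 := by
    simpa [φ] using hanti (left_mem_Icc.2 hT) (right_mem_Icc.2 hT) hT
  have hrescale : exp (-lam * T) * ∫ s in (0:ℝ)..T, exp (lam * s) * h s =
      ∫ s in (0:ℝ)..T, exp (-lam * (T - s)) * h s := by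
    rw [← intervalIntegral.integral_const_mul]
    congr 1 with s
    rw [← mul_assoc, ← exp_add]
    ring_nf
  calc V T = exp (-lam * T) * (exp (lam * T) * V T) := by
        rw [← mul_assoc, ← exp_add]; simp
    _ ≤ exp (-lam * T) * (V 0 + ∫ s in (0:ℝ)..T, exp (lam * s) * h s) := by
        gcongr; simp only [φ] at hφT; linarith
    _ = _ := by rw [mul_add, hrescale]

theorem sqrt_le_exp_mul_add_integral_of_hasDerivAt_le {q q' g : ℝ → ℝ} {lam T : ℝ}
    (hlam : 0 ≤ lam) (hT : 0 ≤ T) (hq : ∀ t, 0 ≤ q t) (hg : Continuous g) (hg0 : ∀ t, 0 ≤ g t)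
    (hqd : ∀ t ∈ Icc 0 T, HasDerivAt q (q' t) t)
    (hq' : ∀ t ∈ Icc 0 T, q' t ≤ -2 * lam * q t + 2 * √(q t) * g t) :
    √(q T) ≤ exp (-lam * T) * √(q 0) + ∫ s in (0:ℝ)..T, exp (-lam * (T - s)) * g s := by
  refine le_of_forall_pos_le_add fun ε hε => ?_
  have hpos : ∀ t, 0 < q t + ε ^ 2 := fun t => by nlinarith [hq t]
  -- `√(q + ε²) - ε` is differentiable where `√q` need not be, and obeys the same estimate.
  set U : ℝ → ℝ := fun t => √(q t + ε ^ 2) - ε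
  have hU : ∀ t ∈ Icc 0 T, HasDerivAt U (q' t / (2 * √(q t + ε ^ 2))) t := fun t ht =>
    (((hqd t ht).add_const _).sqrt (hpos t).ne').sub_const ε
  have hU' : ∀ t ∈ Icc 0 T, q' t / (2 * √(q t + ε ^ 2)) ≤ -lam * U t + g t := fun t ht => by
    have hsq := sq_sqrt (hpos t).le
    have hsqrt_le : √(q t) ≤ √(q t + ε ^ 2) := sqrt_le_sqrt (by nlinarith)
    have hε_le : ε ≤ √(q t + ε ^ 2) := le_sqrt_of_sq_le (by nlinarith [hq t])
    rw [div_le_iff₀ (mul_pos two_pos (sqrt_pos.2 (hpos t)))]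
    nlinarith [hq' t ht, mul_le_mul_of_nonneg_right hsqrt_le (hg0 t),
      mul_nonneg (mul_nonneg hlam hε.le) (sub_nonneg.2 hε_le)]
  have hUT := le_exp_mul_add_integral_of_hasDerivAt_le hT hg hU hU'
  have hsqrtT : √(q T) ≤ U T + ε := by simpa [U] using sqrt_le_sqrt (by nlinarith [hpos T])
  have hU0 : U 0 ≤ √(q 0) := by
    rw [sub_le_iff_le_add, sqrt_le_left (by positivity)]
    nlinarith [sq_sqrt (hq 0), sqrt_nonneg (q 0)]
  have := mul_le_mul_of_nonneg_left hU0 (exp_pos (-lam * T)).le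
  linarith

theorem iss_closed_loop_constant_metric_general {n m : ℕ}
    (f : (Fin n → ℝ) → (Fin n → ℝ))
    (A : (Fin n → ℝ) → Matrix (Fin n) (Fin n) ℝ)
    (hf : ∀ x : Fin n → ℝ,
      HasFDerivAt f ((Matrix.toLin' (A x)).toContinuousLinearMap) x)
    (B : Matrix (Fin n) (Fin m) ℝ)
    (W : Matrix (Fin n) (Fin n) ℝ) (hW : W.PosDef)
    (lam ρ : ℝ) (hlam : 0 < lam)
    (hLMI : ∀ x : Fin n → ℝ,
      ((-(2 * lam)) • W - (W * (A x)ᵀ + A x * W - ρ • (B * Bᵀ))).PosSemidef)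
    (K : Matrix (Fin m) (Fin n) ℝ) (hK : K = (-(ρ / 2)) • (Bᵀ * W⁻¹))
    (M : Matrix (Fin n) (Fin n) ℝ) (hM : M = W⁻¹)
    (ustar : ℝ → (Fin m → ℝ))
    (w : ℝ → (Fin n → ℝ)) (hw : Continuous w)
    (xstar x : ℝ → (Fin n → ℝ))
    (hxstar : ∀ t : ℝ, 0 ≤ t →
      HasDerivAt xstar (f (xstar t) + B.mulVec (ustar t)) t)
    (hx : ∀ t : ℝ, 0 ≤ t →
      HasDerivAt x
        (f (x t) + B.mulVec (ustar t + K.mulVec (x t - xstar t)) + w t) t) :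
    ∀ t : ℝ, 0 ≤ t →
      Real.sqrt ((x t - xstar t) ⬝ᵥ M.mulVec (x t - xstar t)) ≤
        Real.exp (-lam * t) * Real.sqrt ((x 0 - xstar 0) ⬝ᵥ M.mulVec (x 0 - xstar 0)) +
          ∫ s in (0:ℝ)..t, Real.exp (-lam * (t - s)) * Real.sqrt (w s ⬝ᵥ M.mulVec (w s)) := by
  subst hK hM
  intro T hT
  have hMpsd : W⁻¹.PosSemidef := hW.inv.posSemidef
  set e : ℝ → Fin n → ℝ := fun t => x t - xstar t
  set D : ℝ → Fin n → ℝ := fun t =>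
    f (x t) - f (xstar t) + (B * ((-(ρ / 2)) • (Bᵀ * W⁻¹))) *ᵥ e t + w t
  have he : ∀ t ∈ Icc 0 T, HasDerivAt e (D t) t := fun t ht =>
    ((hx t ht.1).sub (hxstar t ht.1)).congr_deriv <| by
      simp only [D, e, mulVec_add, mulVec_mulVec]
      abel
  refine sqrt_le_exp_mul_add_integral_of_hasDerivAt_le hlam.le hT
    (fun t => by simpa using hMpsd.dotProduct_mulVec_nonneg (e t))
    (hw.dotProduct (continuous_const.matrix_mulVec hw)).sqrt (fun _ => sqrt_nonneg _)
    (fun t ht => (he t ht).dotProduct_mulVec_self hW.inv.isHermitian) (fun t _ => ?_)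
  have hcontract := hW.dotProduct_inv_mulVec_closedLoop_sub_le hf hLMI (x t) (xstar t)
  have hdisturbance := hMpsd.dotProduct_mulVec_le_sqrt_mul_sqrt (e t) (w t)
  rw [mulVec_add, dotProduct_add]
  linarith

/-- Input-to-state stability of the constant-metric closed loop: with the CCM feedback
`K = -(ρ/2)BᵀW⁻¹` and metric `M = W⁻¹`, the Riemannian distance
`V(t) = √((x-x⋆)ᵀM(x-x⋆))` satisfies
`V(t) ≤ e^{-λt}V(0) + ∫₀ᵗ e^{-λ(t-s)}√(w(s)ᵀMw(s)) ds`. -/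
theorem iss_closed_loop_constant_metric {n m : ℕ}
    (f : (Fin n → ℝ) → (Fin n → ℝ))
    (A : (Fin n → ℝ) → Matrix (Fin n) (Fin n) ℝ)
    (hf : ∀ x : Fin n → ℝ,
      HasFDerivAt f ((Matrix.toLin' (A x)).toContinuousLinearMap) x)
    (hA : Continuous A)
    (B : Matrix (Fin n) (Fin m) ℝ)
    (W : Matrix (Fin n) (Fin n) ℝ) (hW : W.PosDef)
    (lam ρ : ℝ) (hlam : 0 < lam) (hρ : 0 ≤ ρ)
    (hLMI : ∀ x : Fin n → ℝ,
      ((-(2 * lam)) • W - (W * (A x)ᵀ + A x * W - ρ • (B * Bᵀ))).PosSemidef)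
    (K : Matrix (Fin m) (Fin n) ℝ) (hK : K = (-(ρ / 2)) • (Bᵀ * W⁻¹))
    (M : Matrix (Fin n) (Fin n) ℝ) (hM : M = W⁻¹)
    (ustar : ℝ → (Fin m → ℝ)) (hustar : Continuous ustar)
    (w : ℝ → (Fin n → ℝ)) (hw : Continuous w)
    (xstar x : ℝ → (Fin n → ℝ))
    (hxstar : ∀ t : ℝ, 0 ≤ t →
      HasDerivAt xstar (f (xstar t) + B.mulVec (ustar t)) t)
    (hx : ∀ t : ℝ, 0 ≤ t →
      HasDerivAt x
        (f (x t) + B.mulVec (ustar t + K.mulVec (x t - xstar t)) + w t) t) :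
    ∀ t : ℝ, 0 ≤ t →
      Real.sqrt ((x t - xstar t) ⬝ᵥ M.mulVec (x t - xstar t)) ≤
        Real.exp (-lam * t) * Real.sqrt ((x 0 - xstar 0) ⬝ᵥ M.mulVec (x 0 - xstar 0)) +
          ∫ s in (0:ℝ)..t, Real.exp (-lam * (t - s)) * Real.sqrt (w s ⬝ᵥ M.mulVec (w s)) :=
  iss_closed_loop_constant_metric_general f A hf B W hW lam ρ hlam hLMI K hK M hM ustar w hw xstar x
    hxstar hx
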